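/- Let α ∈ (0,1], let ε ≥ 0, and assume a leximin-optimal distribution exists in X. A distribution x^A ∈ X is an (α,ε)-leximin-approximation (i.e., E(x^A) ≽ α·E(x) − ε·1_n for all x ∈ X, where 1_n is the all-ones vector in ℝ^n) if and only if E(x^A) ≽ E(x) − ε·1_n for all x ∈ X_{≤α}. -/

import Mathlib

/-!
Since `s_d` is worth nothing to every agent, moving probability mass between `s_d` and the other
states scales all expected utilities at once: the `c`-downgrade `dng c` multiplies the mass on the
non-degenerate states, and hence `E`, by `c`. The `α`-downgrade maps `X` into `X_{≤α}` and the
`α`-upgrade, which is the `1/α`-downgrade, maps `X_{≤α}` back into `X`; under these maps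
`α·E(x) − ε` and `E(x) − ε` correspond, so the two families of leximin comparisons coincide.
-/

open Finset

/-- The vector `v` sorted in non-decreasing order: `sortedVec v i` is the
`i`-th smallest entry of `v` (counting repetitions). -/
noncomputable def sortedVec {n : ℕ} (v : Fin n → ℝ) : Fin n → ℝ := v ∘ Tuple.sort v

/-- The sum of the `k` smallest entries of `v`. -/
noncomputable def sumSmallest {n : ℕ} (v : Fin n → ℝ) (k : ℕ) : ℝ :=
  ∑ i ∈ Finset.univ.filter (fun i : Fin n => (i : ℕ) < k), sortedVec v i

/-- `v` is weakly leximin-preferred over `w`. -/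
def LeximinPref {n : ℕ} (v w : Fin n → ℝ) : Prop :=
  sortedVec v = sortedVec w ∨
    ∃ k : Fin n, (∀ i, i < k → sortedVec v i = sortedVec w i) ∧ sortedVec w k < sortedVec v k

/-- `v` is strictly leximin-preferred over `w`. -/
def LeximinStrict {n : ℕ} (v w : Fin n → ℝ) : Prop :=
  ∃ k : Fin n, (∀ i, i < k → sortedVec v i = sortedVec w i) ∧ sortedVec w k < sortedVec v k

/-- `x` is a probability distribution over the (finite) set of states `S`. -/
def IsDistribution {S : Type*} [Fintype S] (x : S → ℝ) : Prop :=
  (∀ s, 0 ≤ x s) ∧ ∑ s, x s = 1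

/-- The expected utility of each agent under the (sub)distribution `x`. -/
noncomputable def expU {n : ℕ} {S : Type*} [Fintype S] (u : Fin n → S → ℝ) (x : S → ℝ) :
    Fin n → ℝ := fun i => ∑ s, x s * u i s

/-- Membership in `X_{≤α}`: a distribution that puts at most `α` total probability
on the non-degenerate states. -/
def InXle {S : Type*} [Fintype S] [DecidableEq S] (α : ℝ) (sd : S) (x : S → ℝ) : Prop :=
  IsDistribution x ∧ ∑ j ∈ Finset.univ.erase sd, x j ≤ α

/-- The α-upgrade of a distribution `x` (w.r.t. the degenerate state `sd`). -/
noncomputable def upg {S : Type*} [Fintype S] [DecidableEq S] (α : ℝ) (sd : S) (x : S → ℝ) :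
    S → ℝ :=
  fun s => if s = sd then 1 - (1 / α) * ∑ j ∈ Finset.univ.erase sd, x j else (1 / α) * x s

/-- The α-downgrade of a distribution `x` (w.r.t. the degenerate state `sd`). -/
noncomputable def dng {S : Type*} [Fintype S] [DecidableEq S] (α : ℝ) (sd : S) (x : S → ℝ) :
    S → ℝ :=
  fun s => if s = sd then 1 - α * ∑ j ∈ Finset.univ.erase sd, x j else α * x s

section Downgrade

variable {S : Type*} [Fintype S] [DecidableEq S] {sd : S}

theorem sum_erase_dng (c : ℝ) (x : S → ℝ) :
    ∑ s ∈ univ.erase sd, dng c sd x s = c * ∑ s ∈ univ.erase sd, x s := by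
  rw [mul_sum]
  refine sum_congr rfl fun s hs => ?_
  simp [dng, ne_of_mem_erase hs]

theorem isDistribution_dng {c : ℝ} (hc : 0 ≤ c) {x : S → ℝ} (hx : ∀ s, 0 ≤ x s)
    (hmass : c * ∑ s ∈ univ.erase sd, x s ≤ 1) : IsDistribution (dng c sd x) := by
  refine ⟨fun s => ?_, ?_⟩
  · by_cases hs : s = sd
    · simpa [dng, hs] using hmass
    · simpa [dng, hs] using mul_nonneg hc (hx s)
  · rw [← add_sum_erase _ _ (mem_univ sd), sum_erase_dng]
    simp [dng]

theorem expU_dng {n : ℕ} {u : Fin n → S → ℝ} (hud : ∀ i, u i sd = 0) (c : ℝ) (x : S → ℝ) :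
    expU u (dng c sd x) = c • expU u x := by
  funext i
  simp only [expU, Pi.smul_apply, smul_eq_mul, mul_sum]
  refine sum_congr rfl fun s _ => ?_
  by_cases hs : s = sd
  · simp [hs, hud]
  · simp [dng, hs, mul_assoc]

theorem upg_eq_dng (α : ℝ) (x : S → ℝ) : upg α sd x = dng (1 / α) sd x := rfl

theorem inXle_dng {α : ℝ} (hα0 : 0 ≤ α) (hα1 : α ≤ 1) {x : S → ℝ} (hx : IsDistribution x) :
    InXle α sd (dng α sd x) := by
  obtain ⟨hnn, hsum⟩ := hx
  have hmass : ∑ s ∈ univ.erase sd, x s ≤ 1 := by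
    rw [← hsum, ← add_sum_erase _ _ (mem_univ sd)]
    linarith [hnn sd]
  have hmass' : α * ∑ s ∈ univ.erase sd, x s ≤ α := mul_le_of_le_one_right hα0 hmass
  exact ⟨isDistribution_dng hα0 hnn (hmass'.trans hα1), by rwa [sum_erase_dng]⟩

theorem isDistribution_upg {α : ℝ} (hα0 : 0 < α) {x : S → ℝ} (hx : InXle α sd x) :
    IsDistribution (upg α sd x) := by
  obtain ⟨⟨hnn, -⟩, hmass⟩ := hx
  refine isDistribution_dng (by positivity) hnn ?_
  rw [one_div, inv_mul_le_iff₀ hα0, mul_one]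
  exact hmass

end Downgrade

theorem stmt19_general {n : ℕ} {S : Type*} [Fintype S] [DecidableEq S]
    (sd : S) (u : Fin n → S → ℝ) (hud : ∀ i, u i sd = 0)
    (α : ℝ) (hα0 : 0 < α) (hα1 : α ≤ 1) (ε : ℝ)
    (xA : S → ℝ) :
    (∀ x : S → ℝ, IsDistribution x →
        LeximinPref (expU u xA) (fun i => α * expU u x i - ε)) ↔
      (∀ x : S → ℝ, InXle α sd x →
        LeximinPref (expU u xA) (fun i => expU u x i - ε)) := by
  constructor
  · intro h x hx
    simpa [upg_eq_dng, expU_dng hud, hα0.ne'] using h _ (isDistribution_upg hα0 hx)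
  · intro h x hx
    simpa [expU_dng hud] using h _ (inXle_dng hα0.le hα1 hx)

/-- assuming a leximin-optimal distribution exists, `xA` is an
(α,ε)-leximin-approximation iff `E(xA) ≽ E(x) − ε·1` for all `x ∈ X_{≤α}`. -/
theorem stmt19 {n : ℕ} (hn : 1 ≤ n) {S : Type*} [Fintype S] [DecidableEq S]
    (sd : S) (u : Fin n → S → ℝ) (hu : ∀ i s, 0 ≤ u i s) (hud : ∀ i, u i sd = 0)
    (α : ℝ) (hα0 : 0 < α) (hα1 : α ≤ 1) (ε : ℝ) (hε : 0 ≤ ε)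
    (hex : ∃ xstar : S → ℝ, IsDistribution xstar ∧
      ∀ x : S → ℝ, IsDistribution x → LeximinPref (expU u xstar) (expU u x))
    (xA : S → ℝ) (hxA : IsDistribution xA) :
    (∀ x : S → ℝ, IsDistribution x →
        LeximinPref (expU u xA) (fun i => α * expU u x i - ε)) ↔
      (∀ x : S → ℝ, InXle α sd x →
        LeximinPref (expU u xA) (fun i => expU u x i - ε)) :=
  stmt19_general sd u hud α hα0 hα1 ε xA
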